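/- arXiv:1904.10826 — 3 statements merged into one kernel-verified Lean document; each statement's English description precedes it below -/
import Mathlib

section
/- If G is a countable discrete abelian group equipped with counting measure, then the Feichtinger algebra coincides with ℓ¹: an element ξ ∈ ℓ²(G) satisfies ∫_{G×Ĝ} |⟨ξ, π(z)ξ⟩| d(μ_G ⊗ μ_Ĝ)(z) < ∞ if and only if Σ_{t∈G} |ξ(t)| < ∞. -/
/- Time-frequency analysis on a locally compact abelian (multiplicatively written) group `H`.
`PontryaginDual H` is the dual group (continuous characters into the circle group) with the
compact-open topology.  `L²(H)` is `MeasureTheory.Lp ℂ 2 μ` for a Haar measure `μ` on `H`. -/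

open MeasureTheory ComplexConjugate

noncomputable section

namespace Gabor

variable {H : Type*} [CommGroup H] [TopologicalSpace H] [IsTopologicalGroup H]
  [MeasurableSpace H] [BorelSpace H]

/-- The function defining the time-frequency shift `π(x,ω)ξ : t ↦ ω(t)·ξ(t·x⁻¹)`
(the group is written multiplicatively, so `t·x⁻¹` is "`t - x`") lies in `L²`. -/
theorem tf_memℒp (μ : Measure H) [μ.IsMulRightInvariant]
    (z : H × PontryaginDual H) (ξ : Lp ℂ 2 μ) :
    MemLp (fun t => (z.2 t : ℂ) * ξ (t * z.1⁻¹)) 2 μ := by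
  have hmp : MeasurePreserving (fun t : H => t * z.1⁻¹) μ μ :=
    measurePreserving_mul_right μ z.1⁻¹
  have h1 : MemLp (fun t => ξ (t * z.1⁻¹)) 2 μ :=
    (Lp.memLp ξ).comp_measurePreserving hmp
  have hω : Continuous fun t : H => (z.2 t : ℂ) :=
    continuous_subtype_val.comp (map_continuous z.2)
  refine MemLp.of_le h1 (hω.aestronglyMeasurable.mul h1.1) ?_
  filter_upwards with t
  rw [norm_mul]
  exact mul_le_of_le_one_left (norm_nonneg _) (le_of_eq (Circle.norm_coe (z.2 t)))

/-- The time-frequency shift `π(z) = π(x,ω) : L²(H) → L²(H)`, `(π(x,ω)ξ)(t) = ω(t)·ξ(t·x⁻¹)`. -/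
def tf (μ : Measure H) [μ.IsMulRightInvariant]
    (z : H × PontryaginDual H) (ξ : Lp ℂ 2 μ) : Lp ℂ 2 μ :=
  (tf_memℒp μ z ξ).toLp _

/-- `stft μ ξ η z` is the inner product `⟨ξ, π(z)η⟩` of the paper (which is linear in `ξ` and
conjugate-linear in `π(z)η`; Mathlib's `inner` is conjugate-linear in its first argument). -/
def stft (μ : Measure H) [μ.IsMulRightInvariant] (ξ η : Lp ℂ 2 μ)
    (z : H × PontryaginDual H) : ℂ :=
  @inner ℂ _ _ (tf μ z η) ξ

variable [MeasurableSpace (PontryaginDual H)]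

/-- Membership in the Feichtinger algebra `S₀(H)`: `∫_{H×Ĥ} |⟨ξ, π(z)ξ⟩| dz < ∞`. -/
def IsS0 (μ : Measure H) [μ.IsMulRightInvariant]
    (μd : Measure (PontryaginDual H)) (ξ : Lp ℂ 2 μ) : Prop :=
  ∫⁻ z : H × PontryaginDual H, (‖stft μ ξ ξ z‖₊ : ENNReal) ∂(μ.prod μd) < ⊤

/-- The Gabor system `(π(z)η)_{z ∈ Λ}` is a Bessel family with Bessel bound `D`:
`∫_Λ |⟨ξ, π(z)η⟩|² dμ_Λ(z) ≤ D·‖ξ‖₂²` for all `ξ ∈ L²(H)`. -/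
def IsBesselBound (μ : Measure H) [μ.IsMulRightInvariant]
    (Λ : Set (H × PontryaginDual H)) (μΛ : Measure Λ)
    (η : Lp ℂ 2 μ) (D : ℝ) : Prop :=
  ∀ ξ : Lp ℂ 2 μ,
    ∫⁻ z : Λ, (‖stft μ ξ η (z : H × PontryaginDual H)‖₊ : ENNReal) ^ 2 ∂μΛ ≤
      ENNReal.ofReal D * (‖ξ‖₊ : ENNReal) ^ 2

/-- The Gabor system `(π(z)η)_{z ∈ Λ}` is a Bessel family. -/
def IsBessel (μ : Measure H) [μ.IsMulRightInvariant]
    (Λ : Set (H × PontryaginDual H)) (μΛ : Measure Λ)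
    (η : Lp ℂ 2 μ) : Prop :=
  ∃ D : ℝ, 0 < D ∧ IsBesselBound μ Λ μΛ η D

/-- The square `‖η‖_{B_Λ}²` of the Bessel norm of `η`, i.e.
`sup_{‖ξ‖₂=1} ∫_Λ |⟨ξ, π(z)η⟩|² dμ_Λ(z)`, as a value in `[0,∞]`. -/
def besselSq (μ : Measure H) [μ.IsMulRightInvariant]
    (Λ : Set (H × PontryaginDual H)) (μΛ : Measure Λ)
    (η : Lp ℂ 2 μ) : ENNReal :=
  ⨆ ξ : {ξ : Lp ℂ 2 μ // ‖ξ‖ = 1},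
    ∫⁻ z : Λ, (‖stft μ (ξ : Lp ℂ 2 μ) η (z : H × PontryaginDual H)‖₊ : ENNReal) ^ 2 ∂μΛ

/-- The concrete realization of the Heisenberg module `E_Λ(H)` inside `L²(H)`: all `η ∈ L²(H)`
generating a Bessel family over `Λ` which are approximated arbitrarily well, in the Bessel
norm, by elements of the Feichtinger algebra `S₀(H)`. -/
def heisSet (μ : Measure H) [μ.IsMulRightInvariant]
    (μd : Measure (PontryaginDual H))
    (Λ : Set (H × PontryaginDual H)) (μΛ : Measure Λ) : Set (Lp ℂ 2 μ) :=
  {η | IsBessel μ Λ μΛ η ∧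
    ∀ ε : ℝ, 0 < ε → ∃ ζ : Lp ℂ 2 μ, IsS0 μ μd ζ ∧
      besselSq μ Λ μΛ (η - ζ) ≤ ENNReal.ofReal (ε ^ 2)}

end Gabor

namespace Gabor

/-- On a discrete group, the counting measure is right-translation invariant (it is the
Haar measure of the discrete group). -/
instance countingMeasure_isMulRightInvariant
    {G : Type*} [CommGroup G] [MeasurableSpace G] [MeasurableSingletonClass G]
    [MeasurableMul G] :
    (Measure.count : Measure G).IsMulRightInvariant := by
  constructor
  intro g
  ext s hs
  rw [Measure.map_apply (measurable_mul_const g) hs,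
    Measure.count_apply hs, Measure.count_apply (measurable_mul_const g hs)]
  exact congrArg _ (Set.encard_congr ((Equiv.mulRight g).subtypeEquiv fun x => Iff.rfl))

end Gabor

open Gabor

/-!
On a discrete group, `V(x, ω) = ⟨π(x, ω)ξ, ξ⟩ = ∑ₜ conj (ξ (t x⁻¹)) ξ t conj (ω t)` is,
for fixed `x`, an absolutely convergent Fourier series on the compact dual group. Bounding it
termwise gives `‖V‖₁ ≤ ‖ξ‖₁² μ(Ĝ)`. Conversely, since characters of a discrete abelian group
separate points, they are orthogonal for the Haar measure, so integrating `V(x, ·)` against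
`ω ↦ ω t₀` recovers the coefficient `conj (ξ (t₀ x⁻¹)) ξ t₀` times `μ(Ĝ)`; summing over `x` gives
`|ξ t₀| ‖ξ‖₁ μ(Ĝ) ≤ ‖V‖₁`, which forces `‖ξ‖₁ < ∞` as soon as `ξ ≠ 0`.
-/

open scoped ENNReal

theorem Circle.enorm_coe (z : Circle) : ‖(z : ℂ)‖ₑ = 1 := by
  rw [← ofReal_norm, Circle.norm_coe, ENNReal.ofReal_one]

theorem ENNReal.tsum_tsum_comp_mul_inv_mul {G : Type*} [Group G] (f g : G → ℝ≥0∞) :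
    ∑' x, ∑' t, f (t * x⁻¹) * g t = (∑' t, f t) * ∑' t, g t := by
  rw [ENNReal.tsum_comm, ← ENNReal.tsum_mul_left]
  refine tsum_congr fun t => ?_
  rw [ENNReal.tsum_mul_right, ← ((Equiv.inv G).trans (Equiv.mulLeft t)).tsum_eq f]
  rfl

namespace AddCircle

def ratToCircle : AddCircle (1 : ℚ) →+ Additive Circle :=
  QuotientAddGroup.lift _ (Circle.expHom.comp ((2 * Real.pi) • (Rat.castHom ℝ).toAddMonoidHom))
    (by
      rintro _ ⟨n, rfl⟩
      simpa [mul_comm] using congrArg Additive.ofMul (Circle.exp_two_pi_mul_int n))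

theorem ratToCircle_injective : Function.Injective ratToCircle := by
  refine (injective_iff_map_eq_zero _).2 fun x hx => ?_
  induction x using QuotientAddGroup.induction_on with
  | H q =>
    obtain ⟨n, hn⟩ := Circle.exp_eq_one.1 (congrArg Additive.toMul hx)
    have hq : q = n := by
      have h : (2 * Real.pi) * q = (2 * Real.pi) * n := by simpa [mul_comm] using hn
      exact_mod_cast mul_left_cancel₀ Real.two_pi_pos.ne' h
    exact (coe_eq_zero_iff _).2 ⟨n, by simp [hq]⟩

end AddCircle

namespace PontryaginDual

variable {G : Type*} [CommGroup G] [TopologicalSpace G]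

theorem continuous_apply_coe (t : G) :
    Continuous fun ω : PontryaginDual G => ((ω t : Circle) : ℂ) :=
  have heval : Continuous fun f : C(G, Circle) => f t := continuous_eval_const t
  continuous_subtype_val.comp <|
    heval.comp (ContinuousMonoidHom.isInducing_toContinuousMap G Circle).continuous

theorem continuous_tsum_mul_conj_apply {a : G → ℂ} (ha : Summable (‖a ·‖)) :
    Continuous fun ω : PontryaginDual G => ∑' t, a t * conj ((ω t : Circle) : ℂ) :=
  continuous_tsum
    (fun t => continuous_const.mul (Complex.continuous_conj.comp (continuous_apply_coe t)))
    ha fun t ω => by simp [Circle.norm_coe]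

theorem exists_apply_ne_one [DiscreteTopology G] {g : G} (hg : g ≠ 1) :
    ∃ ω : PontryaginDual G, ω g ≠ 1 := by
  obtain ⟨c, hc⟩ := CharacterModule.exists_character_apply_ne_zero_of_ne_zero
    (show Additive.ofMul g ≠ 0 from hg)
  refine ⟨⟨MonoidHom.toAdditive.symm (AddCircle.ratToCircle.comp c),
    continuous_of_discreteTopology⟩, fun h => hc (AddCircle.ratToCircle_injective ?_)⟩
  rw [map_zero]
  exact congrArg Additive.ofMul h

variable [MeasurableSpace (PontryaginDual G)] (μ : Measure (PontryaginDual G))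

theorem lintegral_enorm_tsum_mul_conj_apply_le (a : G → ℂ) :
    ∫⁻ ω, ‖∑' t, a t * conj ((ω t : Circle) : ℂ)‖ₑ ∂μ ≤ (∑' t, ‖a t‖ₑ) * μ Set.univ :=
  calc ∫⁻ ω, ‖∑' t, a t * conj ((ω t : Circle) : ℂ)‖ₑ ∂μ
      ≤ ∫⁻ _, ∑' t, ‖a t‖ₑ ∂μ := lintegral_mono fun ω => enorm_tsum_le_tsum_enorm.trans_eq <| by
        simp [Circle.enorm_coe]
    _ = (∑' t, ‖a t‖ₑ) * μ Set.univ := lintegral_const _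

variable [DiscreteTopology G] [BorelSpace (PontryaginDual G)]

theorem integral_apply_eq_zero [μ.IsMulLeftInvariant] {g : G} (hg : g ≠ 1) :
    ∫ ω, ((ω g : Circle) : ℂ) ∂μ = 0 := by
  obtain ⟨ω₀, hω₀⟩ := exists_apply_ne_one hg
  have h : ∫ ω, ((ω g : Circle) : ℂ) ∂μ = (ω₀ g : ℂ) * ∫ ω, ((ω g : Circle) : ℂ) ∂μ := by
    rw [← integral_const_mul, ← integral_mul_left_eq_self _ ω₀]
    rfl
  have h' : ((ω₀ g : ℂ) - 1) * ∫ ω, ((ω g : Circle) : ℂ) ∂μ = 0 := by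
    rw [sub_mul, ← h, one_mul, sub_self]
  refine (mul_eq_zero.1 h').resolve_left fun h1 => hω₀ ?_
  exact Circle.ext (by simpa [sub_eq_zero] using h1)

variable [Countable G] [IsFiniteMeasure μ] [μ.IsMulLeftInvariant]

theorem integral_tsum_mul_conj_apply_mul_apply {a : G → ℂ} (ha : Summable (‖a ·‖)) (t₀ : G) :
    ∫ ω, (∑' t, a t * conj ((ω t : Circle) : ℂ)) * ((ω t₀ : Circle) : ℂ) ∂μ =
      μ.real Set.univ • a t₀ := by
  have hterm (ω : PontryaginDual G) :
      (∑' t, a t * conj ((ω t : Circle) : ℂ)) * ((ω t₀ : Circle) : ℂ) =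
        ∑' t, a t * ((ω (t⁻¹ * t₀) : Circle) : ℂ) := by
    rw [← tsum_mul_right]
    refine tsum_congr fun t => ?_
    rw [_root_.map_mul, map_inv, Circle.coe_mul, Circle.coe_inv_eq_conj, mul_assoc]
  have hmeas (t : G) :
      AEStronglyMeasurable (fun ω : PontryaginDual G => a t * ((ω (t⁻¹ * t₀) : Circle) : ℂ)) μ :=
    (continuous_const.mul (continuous_apply_coe _)).aestronglyMeasurable
  have hfin : ∑' t, ∫⁻ ω, ‖a t * ((ω (t⁻¹ * t₀) : Circle) : ℂ)‖ₑ ∂μ ≠ ⊤ := by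
    simp only [enorm_mul, Circle.enorm_coe, mul_one, lintegral_const, ENNReal.tsum_mul_right]
    exact ENNReal.mul_ne_top (tsum_enorm_ne_top_iff_summable_norm.2 ha) (measure_ne_top μ _)
  simp_rw [hterm]
  rw [integral_tsum hmeas hfin, tsum_eq_single t₀]
  · simp [mul_comm]
  · intro t ht
    rw [integral_const_mul, integral_apply_eq_zero μ (by rwa [Ne, inv_mul_eq_one]), mul_zero]

theorem enorm_mul_measure_univ_le_lintegral_enorm_tsum_mul_conj_apply {a : G → ℂ}
    (ha : Summable (‖a ·‖)) (t₀ : G) :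
    ‖a t₀‖ₑ * μ Set.univ ≤ ∫⁻ ω, ‖∑' t, a t * conj ((ω t : Circle) : ℂ)‖ₑ ∂μ :=
  calc ‖a t₀‖ₑ * μ Set.univ
      = ‖∫ ω, (∑' t, a t * conj ((ω t : Circle) : ℂ)) * ((ω t₀ : Circle) : ℂ) ∂μ‖ₑ := by
        rw [integral_tsum_mul_conj_apply_mul_apply μ ha, enorm_smul,
          Real.enorm_of_nonneg measureReal_nonneg, measureReal_def,
          ENNReal.ofReal_toReal (measure_ne_top μ _), mul_comm]
    _ ≤ ∫⁻ ω, ‖(∑' t, a t * conj ((ω t : Circle) : ℂ)) * ((ω t₀ : Circle) : ℂ)‖ₑ ∂μ :=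
        enorm_integral_le_lintegral_enorm _
    _ = ∫⁻ ω, ‖∑' t, a t * conj ((ω t : Circle) : ℂ)‖ₑ ∂μ := by
        simp only [enorm_mul, Circle.enorm_coe, mul_one]

end PontryaginDual

namespace Gabor

open PontryaginDual

variable {G : Type*} [CommGroup G] [TopologicalSpace G] [DiscreteTopology G]
  [MeasurableSpace G] [BorelSpace G]

local notation "ℓ²" => Lp ℂ 2 (Measure.count : Measure G)

theorem tf_count_apply (z : G × PontryaginDual G) (η : ℓ²) (t : G) :
    tf Measure.count z η t = z.2 t * η (t * z.1⁻¹) :=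
  Measure.ae_count_iff.1 (tf_memℒp _ z η).coeFn_toLp t

theorem summable_norm_conj_mul (ξ η : ℓ²) (x : G) :
    Summable fun t => ‖conj (η (t * x⁻¹)) * ξ t‖ := by
  have h := integrable_count_iff.1 (L2.integrable_inner (𝕜 := ℂ) (tf Measure.count (x, 1) η) ξ)
  simpa [tf_count_apply, mul_comm] using h

variable [Countable G]

theorem stft_count_eq (ξ η : ℓ²) (x : G) (ω : PontryaginDual G) :
    stft Measure.count ξ η (x, ω) =
      ∑' t, conj (η (t * x⁻¹)) * ξ t * conj ((ω t : Circle) : ℂ) := by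
  rw [stft, L2.inner_def, integral_countable (L2.integrable_inner _ _)]
  refine tsum_congr fun t => ?_
  simp [tf_count_apply]
  ring

variable [MeasurableSpace (PontryaginDual G)] [BorelSpace (PontryaginDual G)]
  (μ : Measure (PontryaginDual G))

theorem lintegral_enorm_stft_count_eq_tsum [SFinite μ] (ξ η : ℓ²) :
    ∫⁻ z, ‖stft Measure.count ξ η z‖ₑ ∂(Measure.count.prod μ) =
      ∑' x, ∫⁻ ω, ‖stft Measure.count ξ η (x, ω)‖ₑ ∂μ := by
  have hmeas : Measurable fun z => ‖stft Measure.count ξ η z‖ₑ :=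
    measurable_from_prod_countable_right fun x => by
      simp only [stft_count_eq]
      exact (continuous_tsum_mul_conj_apply (summable_norm_conj_mul ξ η x)).measurable.enorm
  rw [lintegral_prod _ hmeas.aemeasurable, lintegral_count]

theorem lintegral_enorm_stft_count_le [SFinite μ] (ξ η : ℓ²) :
    ∫⁻ z, ‖stft Measure.count ξ η z‖ₑ ∂(Measure.count.prod μ) ≤
      (∑' t, ‖η t‖ₑ) * (∑' t, ‖ξ t‖ₑ) * μ Set.univ := by
  rw [lintegral_enorm_stft_count_eq_tsum, ← ENNReal.tsum_tsum_comp_mul_inv_mul,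
    ← ENNReal.tsum_mul_right]
  refine ENNReal.tsum_le_tsum fun x => ?_
  simp only [stft_count_eq]
  refine (lintegral_enorm_tsum_mul_conj_apply_le μ _).trans_eq ?_
  simp [enorm_mul]

theorem enorm_mul_tsum_mul_measure_univ_le_lintegral_enorm_stft_count [IsFiniteMeasure μ]
    [μ.IsMulLeftInvariant] (ξ η : ℓ²) (t₀ : G) :
    ‖ξ t₀‖ₑ * (∑' t, ‖η t‖ₑ) * μ Set.univ ≤
      ∫⁻ z, ‖stft Measure.count ξ η z‖ₑ ∂(Measure.count.prod μ) := by
  rw [lintegral_enorm_stft_count_eq_tsum,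
    ← ((Equiv.inv G).trans (Equiv.mulLeft t₀)).tsum_eq fun t => ‖η t‖ₑ,
    ← ENNReal.tsum_mul_left, ← ENNReal.tsum_mul_right]
  refine ENNReal.tsum_le_tsum fun x => ?_
  simp only [stft_count_eq]
  refine le_of_eq_of_le ?_ (enorm_mul_measure_univ_le_lintegral_enorm_tsum_mul_conj_apply μ
    (summable_norm_conj_mul ξ η x) t₀)
  simp [enorm_mul, mul_comm]

end Gabor

theorem feichtinger_eq_ell_one_of_discrete_general
    {G : Type*} [CommGroup G] [Countable G] [TopologicalSpace G] [DiscreteTopology G]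
    [MeasurableSpace G] [BorelSpace G]
    [MeasurableSpace (PontryaginDual G)] [BorelSpace (PontryaginDual G)]
    (μd : Measure (PontryaginDual G)) [μd.IsHaarMeasure]
    (ξ : Lp ℂ 2 (Measure.count : Measure G)) :
    IsS0 (Measure.count : Measure G) μd ξ ↔
      ∑' t : G, (‖(ξ : G → ℂ) t‖₊ : ENNReal) < ⊤ := by
  change _ < ⊤ ↔ ∑' t, ‖(ξ : G → ℂ) t‖ₑ < ⊤
  constructor
  · intro hS0
    by_cases hξ : ∀ t, (ξ : G → ℂ) t = 0
    · simp [hξ]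
    obtain ⟨t₀, ht₀⟩ := not_forall.1 hξ
    have hbound := enorm_mul_tsum_mul_measure_univ_le_lintegral_enorm_stft_count μd ξ ξ t₀
    rw [mul_right_comm] at hbound
    exact ENNReal.lt_top_of_mul_ne_top_right (ne_top_of_le_ne_top hS0.ne hbound)
      (mul_ne_zero (enorm_ne_zero.2 ht₀) (isOpen_univ.measure_ne_zero μd Set.univ_nonempty))
  · intro hℓ1
    exact (lintegral_enorm_stft_count_le μd ξ ξ).trans_lt (by finiteness)

/-- If `G` is a countable discrete abelian group equipped with counting
measure, then the Feichtinger algebra coincides with `ℓ¹`: an element `ξ ∈ ℓ²(G)` satisfies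
`∫_{G×Ĝ} |⟨ξ, π(z)ξ⟩| d(μ_G ⊗ μ_Ĝ)(z) < ∞` if and only if `Σ_{t∈G} |ξ(t)| < ∞`. -/
theorem feichtinger_eq_ell_one_of_discrete
    {G : Type*} [CommGroup G] [Countable G] [TopologicalSpace G] [DiscreteTopology G]
    [IsTopologicalGroup G] [MeasurableSpace G] [BorelSpace G]
    [MeasurableSpace (PontryaginDual G)] [BorelSpace (PontryaginDual G)]
    (μd : Measure (PontryaginDual G)) [μd.IsHaarMeasure]
    (ξ : Lp ℂ 2 (Measure.count : Measure G)) :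
    IsS0 (Measure.count : Measure G) μd ξ ↔
      ∑' t : G, (‖(ξ : G → ℂ) t‖₊ : ENNReal) < ⊤ :=
  feichtinger_eq_ell_one_of_discrete_general μd ξ
end
end

section
/- Let E be a Hilbert C*-module over a C*-algebra A and let η₁, …, η_k ∈ E. Then there exist constants C, D > 0 such that C·⟨ξ,ξ⟩_A ≤ Σ_{j=1}^k ⟨ξ,η_j⟩_A·⟨η_j,ξ⟩_A ≤ D·⟨ξ,ξ⟩_A for all ξ ∈ E (i.e. (η₁,…,η_k) is a module frame for E) if and only if {η₁,…,η_k} generates E as an A-module, i.e. for every ξ ∈ E there exist a₁, …, a_k ∈ A such that ξ = Σ_{j=1}^k η_j · a_j. -/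
/-!
The frame operator `S ξ = ∑ j, ⟪η j, ξ⟫ • η j` factors as `θ⋆ θ` through the analysis map
`θ ξ = (⟪η j, ξ⟫)_j` into the standard module `A^k`, and `⟪ξ, S ξ⟫ = ⟪θ ξ, θ ξ⟫` is the frame sum.
`S` lives in the C⋆-algebra of adjointable operators on `E`, where a lower frame bound `C` says
exactly `C ≤ S`; then `S` is invertible and `ξ = S (S⁻¹ ξ)` is a combination of the `η j`.
Conversely, if the `η j` generate `E`, the synthesis map `θ⋆` is surjective, so by the open mapping
theorem `‖θ ξ‖ ≥ c ‖ξ‖`. Testing the spectrum of `S` on approximate eigenvectors turns this norm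
bound into `c² ≤ S`, the lower frame bound; the upper one is the Cauchy–Schwarz inequality.
-/

open scoped RightActions

/-- The `CStarModule` class as it stood in Mathlib (December 2024): a right `A`-module structure
given by `SMul Aᵐᵒᵖ E`, with `A`-valued inner product `A`-linear on the right in the second
variable. -/
class CStarModuleRight (A E : Type*) [NonUnitalSemiring A] [StarRing A]
    [Module ℂ A] [AddCommGroup E] [Module ℂ E] [PartialOrder A] [SMul Aᵐᵒᵖ E] [Norm A] [Norm E]
    extends Inner A E where
  inner_add_right {x} {y} {z} : inner x (y + z) = inner x y + inner x z
  inner_self_nonneg {x} : 0 ≤ inner x x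
  inner_self {x} : inner x x = 0 ↔ x = 0
  inner_op_smul_right {a : A} {x y : E} : inner x (y <• a) = inner x y * a
  inner_smul_right_complex {z : ℂ} {x} {y} : inner x (z • y) = z • inner x y
  star_inner x y : star (inner x y) = inner y x
  norm_eq_sqrt_norm_inner_self x : ‖x‖ = Real.sqrt ‖inner x x‖

open scoped InnerProductSpace

lemma IsSelfAdjoint.exists_ne_zero_norm_sub_algebraMap_mul_le {B : Type*} [CStarAlgebra B]
    {a : B} (ha : IsSelfAdjoint a) {r : ℝ} (hr : r ∈ spectrum ℝ a) {ε : ℝ} (hε : 0 < ε) :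
    ∃ b : B, b ≠ 0 ∧ ‖(a - algebraMap ℝ B r) * b‖ ≤ ε * ‖b‖ := by
  obtain _ | _ := subsingleton_or_nontrivial B
  · simp [spectrum.of_subsingleton] at hr
  let f : ℝ → ℝ := fun t => max 0 (1 - |t - r| / ε)
  have hb : 1 ≤ ‖cfc f a‖ := by
    have h1 : (1 : ℝ) ∈ spectrum ℝ (cfc f a) := by
      rw [cfc_map_spectrum f a]
      exact ⟨r, hr, by simp [f]⟩
    simpa using spectrum.norm_le_norm_of_mem h1
  refine ⟨cfc f a, norm_pos_iff.mp (one_pos.trans_le hb), ?_⟩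
  have hmul : (a - algebraMap ℝ B r) * cfc f a = cfc (fun t => (t - r) * f t) a := by
    rw [cfc_mul (fun t => t - r) f a, cfc_sub (fun t => t) (fun _ => r) a, cfc_id' ℝ a,
      cfc_const r a]
  have hg : ∀ t, ‖(t - r) * f t‖ ≤ ε := fun t => by
    rcases le_or_gt |t - r| ε with h | h
    · have hf1 : f t ≤ 1 :=
        max_le zero_le_one (by linarith [div_nonneg (abs_nonneg (t - r)) hε.le])
      rw [norm_mul, Real.norm_eq_abs, Real.norm_eq_abs,
        abs_of_nonneg (le_max_left 0 (1 - |t - r| / ε))]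
      simpa using mul_le_mul h hf1 (le_max_left _ _) hε.le
    · have : f t = 0 := max_eq_left (by rw [sub_nonpos, one_le_div hε]; exact h.le)
      simp [this, hε.le]
  calc ‖(a - algebraMap ℝ B r) * cfc f a‖ ≤ ε := hmul ▸ norm_cfc_le hε.le fun t _ => hg t
    _ ≤ ε * ‖cfc f a‖ := le_mul_of_one_le_right hε.le hb

namespace CStarModule

open scoped WithCStarModule

variable {A E : Type*} [NonUnitalCStarAlgebra A] [PartialOrder A] [SMul A E]
  [NormedAddCommGroup E] [NormedSpace ℂ E] [CStarModule A E]

variable (A) in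
lemma ext_inner_left {x y : E} (h : ∀ z : E, ⟪z, x⟫_A = ⟪z, y⟫_A) : x = y := by
  rw [← sub_eq_zero, ← inner_self (A := A), inner_sub_right, h, sub_self]

lemma add_smul (a b : A) (x : E) : (a + b) • x = a • x + b • x :=
  ext_inner_left A fun z => by simp [add_mul]

lemma smul_assoc_complex (c : ℂ) (a : A) (x : E) : (c • a) • x = c • a • x :=
  ext_inner_left A fun z => by simp [smul_mul_assoc]

lemma norm_smul_le (a : A) (x : E) : ‖a • x‖ ≤ ‖a‖ * ‖x‖ := by
  refine le_of_sq_le_sq ?_ (by positivity)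
  calc ‖a • x‖ ^ 2 = ‖a * ⟪x, x⟫_A * star a‖ := by rw [norm_sq_eq A]; simp [mul_assoc]
    _ ≤ ‖a‖ * ‖⟪x, x⟫_A‖ * ‖star a‖ := norm_mul₃_le
    _ = (‖a‖ * ‖x‖) ^ 2 := by rw [norm_star, ← norm_sq_eq A]; ring

variable (A) in
noncomputable def toSpanSingleton (x : E) : A →L[ℂ] E :=
  LinearMap.mkContinuous
    { toFun a := a • x
      map_add' a b := add_smul a b x
      map_smul' c a := smul_assoc_complex c a x }
    ‖x‖ fun a => (norm_smul_le a x).trans_eq (mul_comm _ _)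

variable (A) in
def IsAdjointPair (S T : E →L[ℂ] E) : Prop :=
  ∀ x y, ⟪S x, y⟫_A = ⟪x, T y⟫_A

lemma IsAdjointPair.symm {S T : E →L[ℂ] E} (h : IsAdjointPair A S T) : IsAdjointPair A T S :=
  fun x y => by rw [← star_inner y, ← h, star_inner]

lemma IsAdjointPair.unique {S S' T : E →L[ℂ] E} (h : IsAdjointPair A S T)
    (h' : IsAdjointPair A S' T) : S = S' :=
  ContinuousLinearMap.ext fun x => ext_inner_left A fun z => by
    rw [← star_inner (S x), ← star_inner (S' x), h, h']

variable (A E) in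
def adjointable : Subalgebra ℂ (E →L[ℂ] E) where
  carrier := {T | ∃ S, IsAdjointPair A S T}
  mul_mem' := by
    rintro T U ⟨S, hS⟩ ⟨V, hV⟩
    exact ⟨V * S, fun x y => by rw [mul_apply_eq_comp, mul_apply_eq_comp, hV, hS]⟩
  add_mem' := by
    rintro T U ⟨S, hS⟩ ⟨V, hV⟩
    exact ⟨S + V, fun x y => by rw [add_apply, add_apply, inner_add_left, inner_add_right, hS, hV]⟩
  algebraMap_mem' c := ⟨algebraMap ℂ _ (star c), fun x y => by
    simp [Algebra.algebraMap_eq_smul_one]⟩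

namespace adjointable

noncomputable instance : Star (adjointable A E) where
  star T := ⟨T.2.choose, _, T.2.choose_spec.symm⟩

lemma isAdjointPair_star (T : adjointable A E) :
    IsAdjointPair A (↑(star T) : E →L[ℂ] E) T :=
  T.2.choose_spec

lemma star_eq_of_isAdjointPair {T : adjointable A E} {S : E →L[ℂ] E}
    (h : IsAdjointPair A S T) : (↑(star T) : E →L[ℂ] E) = S :=
  (isAdjointPair_star T).unique h

noncomputable instance : StarRing (adjointable A E) where
  star_involutive T := Subtype.ext <| star_eq_of_isAdjointPair (isAdjointPair_star T).symm
  star_mul T U := Subtype.ext <| star_eq_of_isAdjointPair fun x y => by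
    rw [Subalgebra.coe_mul, Subalgebra.coe_mul, mul_apply_eq_comp, mul_apply_eq_comp,
      isAdjointPair_star U, isAdjointPair_star T]
  star_add T U := Subtype.ext <| star_eq_of_isAdjointPair fun x y => by
    rw [Subalgebra.coe_add, Subalgebra.coe_add, add_apply, add_apply, inner_add_left,
      inner_add_right, isAdjointPair_star T, isAdjointPair_star U]

noncomputable instance : StarModule ℂ (adjointable A E) where
  star_smul c T := Subtype.ext <| star_eq_of_isAdjointPair fun x y => by
    simp [isAdjointPair_star T _ _]

lemma isSelfAdjoint_of_isAdjointPair {T : adjointable A E}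
    (h : IsAdjointPair A (T : E →L[ℂ] E) T) : IsSelfAdjoint T :=
  Subtype.ext (star_eq_of_isAdjointPair h)

lemma algebraMap_real_apply (r : ℝ) (x : E) :
    (↑(algebraMap ℝ (adjointable A E) r) : E →L[ℂ] E) x = r • x := by
  rw [IsScalarTower.algebraMap_apply ℝ ℂ, Subalgebra.coe_algebraMap,
    Algebra.algebraMap_eq_smul_one, smul_apply, one_apply_eq_self, algebraMap_smul]

end adjointable

variable {ι : Type*}

section Fintype

variable [Fintype ι]

variable (A) in
def IsFrame (η : ι → E) : Prop :=
  ∃ C D : ℝ, 0 < C ∧ 0 < D ∧ ∀ ξ : E,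
    C • ⟪ξ, ξ⟫_A ≤ ∑ j, ⟪η j, ξ⟫_A * ⟪ξ, η j⟫_A ∧ ∑ j, ⟪η j, ξ⟫_A * ⟪ξ, η j⟫_A ≤ D • ⟪ξ, ξ⟫_A

variable (A) in
noncomputable def synthesis (η : ι → E) : C⋆ᵐᵒᵈ(A, ι → A) →L[ℂ] E :=
  ∑ j, toSpanSingleton A (η j) ∘L ContinuousLinearMap.proj j ∘L
    (WithCStarModule.equivL ℂ).toContinuousLinearMap

@[simp] lemma synthesis_apply (η : ι → E) (a : C⋆ᵐᵒᵈ(A, ι → A)) :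
    synthesis A η a = ∑ j, a j • η j := by
  simp [synthesis, toSpanSingleton]

end Fintype

variable [StarOrderedRing A]

lemma IsAdjointPair.norm_le {S T : E →L[ℂ] E} (h : IsAdjointPair A S T) : ‖S‖ ≤ ‖T‖ := by
  refine S.opNorm_le_bound (norm_nonneg T) fun x => ?_
  rcases (norm_nonneg (S x)).eq_or_lt with hSx | hSx
  · rw [← hSx]; positivity
  refine le_of_mul_le_mul_right ?_ hSx
  calc ‖S x‖ * ‖S x‖ = ‖⟪x, T (S x)⟫_A‖ := by rw [← h, ← norm_sq_eq A, sq]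
    _ ≤ ‖x‖ * (‖T‖ * ‖S x‖) := (norm_inner_le E).trans (by gcongr; exact T.le_opNorm _)
    _ = ‖T‖ * ‖x‖ * ‖S x‖ := by ring

lemma isClosed_setOf_isAdjointPair :
    IsClosed {p : (E →L[ℂ] E) × (E →L[ℂ] E) | IsAdjointPair A p.2 p.1} := by
  simp only [IsAdjointPair, Set.ofPred_forall]
  refine isClosed_iInter fun x => isClosed_iInter fun y => isClosed_eq ?_ ?_
  · exact continuous_inner.comp (((ContinuousLinearMap.apply ℂ E x).continuous.comp
      continuous_snd).prodMk continuous_const)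
  · exact continuous_inner.comp (continuous_const.prodMk
      ((ContinuousLinearMap.apply ℂ E y).continuous.comp continuous_fst))

namespace adjointable

noncomputable instance : CStarRing (adjointable A E) where
  norm_mul_self_le T := by
    have hT : ‖(T : E →L[ℂ] E)‖ ≤ √‖star T * T‖ := by
      refine ContinuousLinearMap.opNorm_le_bound _ (Real.sqrt_nonneg _) fun x => ?_
      refine le_of_sq_le_sq ?_ (by positivity)
      calc ‖(T : E →L[ℂ] E) x‖ ^ 2 = ‖⟪x, (↑(star T * T) : E →L[ℂ] E) x⟫_A‖ := by
            rw [norm_sq_eq A, Subalgebra.coe_mul, mul_apply_eq_comp, (isAdjointPair_star T).symm]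
        _ ≤ ‖x‖ * (‖star T * T‖ * ‖x‖) :=
            (norm_inner_le E).trans (by gcongr; exact ContinuousLinearMap.le_opNorm _ _)
        _ = (√‖star T * T‖ * ‖x‖) ^ 2 := by
            rw [mul_pow, Real.sq_sqrt (norm_nonneg (star T * T))]; ring
    calc ‖T‖ * ‖T‖ ≤ √‖star T * T‖ * √‖star T * T‖ := mul_self_le_mul_self (norm_nonneg _) hT
      _ = ‖star T * T‖ := Real.mul_self_sqrt (norm_nonneg (star T * T))

-- `T ↦ (T, T⋆)` is an isometry onto the closed set of adjoint pairs.
instance [CompleteSpace E] : CompleteSpace (adjointable A E) := by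
  let f : adjointable A E → (E →L[ℂ] E) × (E →L[ℂ] E) := fun T => (T, ↑(star T))
  have hf : Isometry f := Isometry.of_dist_eq fun T U => by
    change max (dist T U) (dist (star T) (star U)) = dist T U
    have : dist (star T) (star U) = dist T U := dist_star_star T U
    rw [this, max_self]
  have hrange : Set.range f = {p | IsAdjointPair A p.2 p.1} := by
    ext ⟨T, S⟩
    refine ⟨?_, fun h => ⟨⟨T, S, h⟩, ?_⟩⟩
    · rintro ⟨U, hU⟩
      cases hU
      exact isAdjointPair_star U
    · exact Prod.ext rfl (star_eq_of_isAdjointPair h)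
  rw [completeSpace_iff_isComplete_range hf.isUniformInducing, hrange]
  exact isClosed_setOf_isAdjointPair.isComplete

variable [CompleteSpace E]

noncomputable instance : CStarAlgebra (adjointable A E) where

noncomputable instance : PartialOrder (adjointable A E) := CStarAlgebra.spectralOrder _

instance : StarOrderedRing (adjointable A E) := CStarAlgebra.spectralOrderedRing _

lemma exists_ne_zero_norm_apply_sub_smul_le {T : adjointable A E} (hT : IsSelfAdjoint T)
    {r : ℝ} (hr : r ∈ spectrum ℝ T) {ε : ℝ} (hε : 0 < ε) :
    ∃ ζ : E, ζ ≠ 0 ∧ ‖(T : E →L[ℂ] E) ζ - r • ζ‖ ≤ ε * ‖ζ‖ := by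
  obtain ⟨b, hb, hTb⟩ := hT.exists_ne_zero_norm_sub_algebraMap_mul_le hr (half_pos hε)
  have hb' : 0 < ‖(b : E →L[ℂ] E)‖ := (norm_pos_iff (a := b)).mpr hb
  obtain ⟨x, hx, hbx⟩ := (b : E →L[ℂ] E).exists_lt_apply_of_lt_opNorm (half_lt_self hb')
  refine ⟨(b : E →L[ℂ] E) x, norm_pos_iff.mp ((half_pos hb').trans hbx), ?_⟩
  calc ‖(T : E →L[ℂ] E) ((b : E →L[ℂ] E) x) - r • (b : E →L[ℂ] E) x‖
      = ‖(↑((T - algebraMap ℝ _ r) * b) : E →L[ℂ] E) x‖ := by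
        rw [Subalgebra.coe_mul, mul_apply_eq_comp, Subalgebra.coe_sub, sub_apply,
          algebraMap_real_apply]
    _ ≤ ε / 2 * ‖(b : E →L[ℂ] E)‖ * 1 :=
        (ContinuousLinearMap.le_opNorm _ x).trans (by gcongr; exact hTb)
    _ ≤ ε * ‖(b : E →L[ℂ] E) x‖ := by nlinarith

lemma exists_ne_zero_norm_inner_apply_sub_le {T : adjointable A E} (hT : IsSelfAdjoint T)
    {r : ℝ} (hr : r ∈ spectrum ℝ T) {ε : ℝ} (hε : 0 < ε) :
    ∃ ζ : E, ζ ≠ 0 ∧ ‖⟪ζ, (T : E →L[ℂ] E) ζ⟫_A - r • ⟪ζ, ζ⟫_A‖ ≤ ε * ‖ζ‖ ^ 2 := by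
  obtain ⟨ζ, hζ, hTζ⟩ := exists_ne_zero_norm_apply_sub_smul_le hT hr hε
  refine ⟨ζ, hζ, ?_⟩
  rw [← inner_smul_right_real, ← inner_sub_right]
  calc _ ≤ ‖ζ‖ * (ε * ‖ζ‖) := (norm_inner_le E).trans (by gcongr)
    _ = ε * ‖ζ‖ ^ 2 := by ring

lemma inner_apply_self_mono {T U : adjointable A E} (h : T ≤ U) (ξ : E) :
    ⟪ξ, (T : E →L[ℂ] E) ξ⟫_A ≤ ⟪ξ, (U : E →L[ℂ] E) ξ⟫_A := by
  obtain ⟨R, hR⟩ := CStarAlgebra.nonneg_iff_eq_star_mul_self.mp (sub_nonneg.mpr h)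
  have : ⟪ξ, (U : E →L[ℂ] E) ξ⟫_A - ⟪ξ, (T : E →L[ℂ] E) ξ⟫_A =
      ⟪(R : E →L[ℂ] E) ξ, (R : E →L[ℂ] E) ξ⟫_A := by
    rw [← inner_sub_right, ← sub_apply, ← Subalgebra.coe_sub, hR, Subalgebra.coe_mul,
      mul_apply_eq_comp, (isAdjointPair_star R).symm]
  exact sub_nonneg.mp (this ▸ inner_self_nonneg)

lemma nonneg_of_inner_apply_self_nonneg {T : adjointable A E} (hT : IsSelfAdjoint T)
    (h : ∀ ξ : E, 0 ≤ ⟪ξ, (T : E →L[ℂ] E) ξ⟫_A) : 0 ≤ T := by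
  rw [StarOrderedRing.nonneg_iff_spectrum_nonneg (R := ℝ) T hT]
  intro r hr
  by_contra! hr0
  obtain ⟨ζ, hζ, hTζ⟩ := exists_ne_zero_norm_inner_apply_sub_le hT hr (half_pos (neg_pos.mpr hr0))
  have hle : -r * ‖ζ‖ ^ 2 ≤ ‖⟪ζ, (T : E →L[ℂ] E) ζ⟫_A - r • ⟪ζ, ζ⟫_A‖ := by
    have hζζ : 0 ≤ -r • ⟪ζ, ζ⟫_A := smul_nonneg (neg_nonneg.mpr hr0.le) inner_self_nonneg
    calc -r * ‖ζ‖ ^ 2 = ‖-r • ⟪ζ, ζ⟫_A‖ := by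
          rw [norm_smul, Real.norm_of_nonneg (neg_nonneg.mpr hr0.le), norm_sq_eq A]
      _ ≤ _ := CStarAlgebra.norm_le_norm_of_nonneg_of_le hζζ <| by
          rw [sub_eq_add_neg, ← neg_smul]; exact le_add_of_nonneg_left (h ζ)
  have : 0 < ‖ζ‖ ^ 2 := by positivity
  nlinarith

lemma algebraMap_le_of_mul_norm_sq_le {T : adjointable A E} (hT : 0 ≤ T) {c : ℝ}
    (h : ∀ ξ : E, c * ‖ξ‖ ^ 2 ≤ ‖⟪ξ, (T : E →L[ℂ] E) ξ⟫_A‖) :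
    algebraMap ℝ (adjointable A E) c ≤ T := by
  rw [algebraMap_le_iff_le_spectrum (ha := hT.isSelfAdjoint)]
  intro r hr
  have hr0 : 0 ≤ r := spectrum_nonneg_of_nonneg hT hr
  refine le_of_forall_pos_le_add fun ε hε => ?_
  obtain ⟨ζ, hζ, hTζ⟩ := exists_ne_zero_norm_inner_apply_sub_le hT.isSelfAdjoint hr hε
  refine le_of_mul_le_mul_right ?_ (by positivity : 0 < ‖ζ‖ ^ 2)
  calc c * ‖ζ‖ ^ 2 ≤ ‖⟪ζ, (T : E →L[ℂ] E) ζ⟫_A‖ := h ζ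
    _ ≤ ‖⟪ζ, (T : E →L[ℂ] E) ζ⟫_A - r • ⟪ζ, ζ⟫_A‖ + ‖r • ⟪ζ, ζ⟫_A‖ := norm_le_norm_sub_add _ _
    _ ≤ ε * ‖ζ‖ ^ 2 + r * ‖ζ‖ ^ 2 := by
        rw [norm_smul, Real.norm_of_nonneg hr0, ← norm_sq_eq A]
        gcongr
    _ = (r + ε) * ‖ζ‖ ^ 2 := by ring

lemma algebraMap_le_iff_forall_smul_inner_self_le {T : adjointable A E} (hT : IsSelfAdjoint T)
    {c : ℝ} :
    algebraMap ℝ (adjointable A E) c ≤ T ↔ ∀ ξ : E, c • ⟪ξ, ξ⟫_A ≤ ⟪ξ, (T : E →L[ℂ] E) ξ⟫_A := by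
  have hc : ∀ ξ : E, ⟪ξ, (↑(algebraMap ℝ (adjointable A E) c) : E →L[ℂ] E) ξ⟫_A =
      c • ⟪ξ, ξ⟫_A := fun ξ => by
    rw [algebraMap_real_apply, inner_smul_right_real]
  refine ⟨fun h ξ => hc ξ ▸ inner_apply_self_mono h ξ, fun h => sub_nonneg.mp ?_⟩
  refine nonneg_of_inner_apply_self_nonneg (hT.sub (.algebraMap _ (.all c))) fun ξ => ?_
  rw [Subalgebra.coe_sub, sub_apply, inner_sub_right, hc, sub_nonneg]
  exact h ξ

end adjointable

variable (A) in
noncomputable def analysis (η : ι → E) : E →L[ℂ] C⋆ᵐᵒᵈ(A, ι → A) :=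
  (WithCStarModule.equivL ℂ).symm.toContinuousLinearMap ∘L
    ContinuousLinearMap.pi fun j => innerSL (η j)

@[simp] lemma analysis_apply (η : ι → E) (ξ : E) (j : ι) : analysis A η ξ j = ⟪η j, ξ⟫_A := rfl

variable [Fintype ι] (η : ι → E)

lemma inner_synthesis (ξ : E) (a : C⋆ᵐᵒᵈ(A, ι → A)) :
    ⟪ξ, synthesis A η a⟫_A = ⟪analysis A η ξ, a⟫_A := by
  simp [WithCStarModule.pi_inner, WithCStarModule.inner_def, inner_sum_right]

lemma inner_analysis_self (ξ : E) :
    ⟪analysis A η ξ, analysis A η ξ⟫_A = ∑ j, ⟪η j, ξ⟫_A * ⟪ξ, η j⟫_A := by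
  simp [WithCStarModule.pi_inner, WithCStarModule.inner_def]

lemma inner_analysis_self_le (ξ : E) :
    ⟪analysis A η ξ, analysis A η ξ⟫_A ≤ (∑ j, ‖η j‖ ^ 2) • ⟪ξ, ξ⟫_A := by
  rw [inner_analysis_self, Finset.sum_smul]
  exact Finset.sum_le_sum fun j _ => inner_mul_inner_swap_le

variable (A) in
noncomputable def frameOp : E →L[ℂ] E := synthesis A η ∘L analysis A η

lemma frameOp_apply (ξ : E) : frameOp A η ξ = ∑ j, ⟪η j, ξ⟫_A • η j := by
  simp [frameOp]

lemma inner_frameOp (ξ ζ : E) :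
    ⟪ξ, frameOp A η ζ⟫_A = ⟪analysis A η ξ, analysis A η ζ⟫_A :=
  inner_synthesis η ξ _

lemma isAdjointPair_frameOp : IsAdjointPair A (frameOp A η) (frameOp A η) := fun x y => by
  rw [← star_inner, inner_frameOp, inner_frameOp, star_inner]

variable (A) in
noncomputable def frameOpAdjointable : adjointable A E :=
  ⟨frameOp A η, _, isAdjointPair_frameOp η⟩

lemma inner_frameOpAdjointable_self (ξ : E) :
    ⟪ξ, (frameOpAdjointable A η : E →L[ℂ] E) ξ⟫_A = ∑ j, ⟪η j, ξ⟫_A * ⟪ξ, η j⟫_A :=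
  (inner_frameOp η ξ ξ).trans (inner_analysis_self η ξ)

lemma isSelfAdjoint_frameOpAdjointable : IsSelfAdjoint (frameOpAdjointable A η) :=
  adjointable.isSelfAdjoint_of_isAdjointPair (isAdjointPair_frameOp η)

lemma exists_pos_mul_norm_le_of_surjective {F : Type*} [SMul A F] [NormedAddCommGroup F]
    [NormedSpace ℂ F] [CStarModule A F] [CompleteSpace E] [CompleteSpace F] {T : F →L[ℂ] E}
    (hT : Function.Surjective T) {T' : E → F} (h : ∀ ξ a, ⟪ξ, T a⟫_A = ⟪T' ξ, a⟫_A) :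
    ∃ c > 0, ∀ ξ, c * ‖ξ‖ ≤ ‖T' ξ‖ := by
  obtain ⟨M, hM, hpre⟩ := T.exists_preimage_norm_le hT
  refine ⟨M⁻¹, inv_pos.mpr hM, fun ξ => ?_⟩
  obtain ⟨a, rfl, ha⟩ := hpre ξ
  rcases (norm_nonneg (T a)).eq_or_lt with h0 | hpos
  · rw [← h0, mul_zero]; exact norm_nonneg _
  rw [inv_mul_le_iff₀ hM]
  refine le_of_mul_le_mul_right ?_ hpos
  calc ‖T a‖ * ‖T a‖ = ‖⟪T' (T a), a⟫_A‖ := by rw [← h, ← norm_sq_eq A, sq]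
    _ ≤ ‖T' (T a)‖ * (M * ‖T a‖) := (norm_inner_le F).trans (by gcongr)
    _ = M * ‖T' (T a)‖ * ‖T a‖ := by ring

variable [CompleteSpace E] {η}

lemma IsFrame.exists_eq_sum_smul (h : IsFrame A η) (ξ : E) : ∃ a : ι → A, ξ = ∑ j, a j • η j := by
  obtain ⟨C, _, hC, _, hCD⟩ := h
  have hle : algebraMap ℝ _ C ≤ frameOpAdjointable A η :=
    (adjointable.algebraMap_le_iff_forall_smul_inner_self_le
      (isSelfAdjoint_frameOpAdjointable η)).mpr
      fun ξ => inner_frameOpAdjointable_self (A := A) η ξ ▸ (hCD ξ).1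
  have hunit : IsUnit (frameOp A η) :=
    (((isStrictlyPositive_algebraMap hC).of_le hle).isUnit).map (adjointable A E).val
  obtain ⟨ζ, rfl⟩ := (ContinuousLinearMap.isUnit_iff_bijective.mp hunit).surjective ξ
  exact ⟨fun j => ⟪η j, ζ⟫_A, frameOp_apply η ζ⟩

lemma isFrame_of_forall_exists_eq_sum_smul (h : ∀ ξ : E, ∃ a : ι → A, ξ = ∑ j, a j • η j) :
    IsFrame A η := by
  have hsurj : Function.Surjective (synthesis A η) := fun ξ => by
    obtain ⟨a, rfl⟩ := h ξ
    exact ⟨(WithCStarModule.equiv A (ι → A)).symm a, synthesis_apply η _⟩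
  obtain ⟨c, hc, hθ⟩ := exists_pos_mul_norm_le_of_surjective hsurj (inner_synthesis η)
  have hS : 0 ≤ frameOpAdjointable A η :=
    adjointable.nonneg_of_inner_apply_self_nonneg (isSelfAdjoint_frameOpAdjointable η) fun ξ =>
      inner_frameOp (A := A) η ξ ξ ▸ inner_self_nonneg
  have hlow : algebraMap ℝ _ (c ^ 2) ≤ frameOpAdjointable A η :=
    adjointable.algebraMap_le_of_mul_norm_sq_le hS fun ξ => by
      change _ ≤ ‖⟪ξ, frameOp A η ξ⟫_A‖
      rw [inner_frameOp, ← norm_sq_eq A, ← mul_pow]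
      exact pow_le_pow_left₀ (by positivity) (hθ ξ) 2
  refine ⟨c ^ 2, ∑ j, ‖η j‖ ^ 2 + 1, by positivity, by positivity, fun ξ => ⟨?_, ?_⟩⟩
  · rw [← inner_frameOpAdjointable_self]
    exact (adjointable.algebraMap_le_iff_forall_smul_inner_self_le
      (isSelfAdjoint_frameOpAdjointable η)).mp hlow ξ
  · rw [← inner_analysis_self]
    exact (inner_analysis_self_le η ξ).trans
      (smul_le_smul_of_nonneg_right (by linarith) inner_self_nonneg)

theorem isFrame_iff_forall_exists_eq_sum_smul :
    IsFrame A η ↔ ∀ ξ : E, ∃ a : ι → A, ξ = ∑ j, a j • η j :=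
  ⟨IsFrame.exists_eq_sum_smul, isFrame_of_forall_exists_eq_sum_smul⟩

end CStarModule

/-- Mathlib's `CStarModule` now takes a left action with `⟪x, a • y⟫ = a * ⟪x, y⟫`; a right module
in the older convention of `CStarModuleRight` is such a module over `Aᵐᵒᵖ`. -/
@[reducible] noncomputable def CStarModuleRight.toCStarModuleMulOpposite (A E : Type*)
    [NonUnitalCStarAlgebra A] [PartialOrder A] [NormedAddCommGroup E] [NormedSpace ℂ E]
    [SMul Aᵐᵒᵖ E] [CStarModuleRight A E] : CStarModule Aᵐᵒᵖ E where
  inner x y := MulOpposite.op (inner A x y)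
  inner_add_right := by simp [CStarModuleRight.inner_add_right]
  inner_self_nonneg := MulOpposite.op_nonneg.mpr CStarModuleRight.inner_self_nonneg
  inner_self := by simp [CStarModuleRight.inner_self]
  inner_op_smul_right {a x y} := by
    rw [← MulOpposite.op_unop a, CStarModuleRight.inner_op_smul_right, MulOpposite.op_mul]
  inner_smul_right_complex := by simp [CStarModuleRight.inner_smul_right_complex]
  star_inner x y := by rw [← MulOpposite.op_star, CStarModuleRight.star_inner]
  norm_eq_sqrt_norm_inner_self x := by
    rw [MulOpposite.norm_op, CStarModuleRight.norm_eq_sqrt_norm_inner_self (A := A) x]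

/-- Let `E` be a Hilbert C*-module over a C*-algebra `A` and let
`η₁, …, η_k ∈ E`.  Then there exist constants `C, D > 0` such that
`C·⟪ξ,ξ⟫ ≤ Σ_j ⟪ξ,η_j⟫·⟪η_j,ξ⟫ ≤ D·⟪ξ,ξ⟫` for all `ξ ∈ E` (i.e. `(η₁,…,η_k)` is a module
frame for `E`) if and only if `{η₁,…,η_k}` generates `E` as an `A`-module: for every `ξ ∈ E`
there are `a₁, …, a_k ∈ A` with `ξ = Σ_j η_j · a_j`. -/
theorem finite_module_frame_iff_generating
    {A E : Type*} [NonUnitalCStarAlgebra A] [PartialOrder A] [StarOrderedRing A]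
    [NormedAddCommGroup E] [NormedSpace ℂ E] [SMul Aᵐᵒᵖ E] [CStarModuleRight A E]
    [CompleteSpace E]
    (k : ℕ) (η : Fin k → E) :
    (∃ C D : ℝ, 0 < C ∧ 0 < D ∧ ∀ ξ : E,
        (C : ℂ) • (inner (𝕜 := A) ξ ξ) ≤
          ∑ j, inner (𝕜 := A) ξ (η j) * inner (𝕜 := A) (η j) ξ ∧
        ∑ j, inner (𝕜 := A) ξ (η j) * inner (𝕜 := A) (η j) ξ ≤
          (D : ℂ) • (inner (𝕜 := A) ξ ξ)) ↔
    (∀ ξ : E, ∃ a : Fin k → A, ξ = ∑ j, η j <• a j) := by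
  let := CStarModuleRight.toCStarModuleMulOpposite A E
  have hsum (ξ : E) : ∑ j, inner Aᵐᵒᵖ (η j) ξ * inner Aᵐᵒᵖ ξ (η j) =
      MulOpposite.op (∑ j, inner A ξ (η j) * inner A (η j) ξ) := by
    simp only [Finset.op_sum, MulOpposite.op_mul]; rfl
  have hle (c : ℝ) (x y : A) : (c : ℂ) • x ≤ y ↔ c • MulOpposite.op x ≤ MulOpposite.op y := by
    rw [Complex.coe_smul, ← MulOpposite.op_smul, MulOpposite.op_le_op]
  calc _ ↔ CStarModule.IsFrame Aᵐᵒᵖ η := by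
        simp only [CStarModule.IsFrame, hsum, hle]; rfl
    _ ↔ ∀ ξ : E, ∃ b : Fin k → Aᵐᵒᵖ, ξ = ∑ j, b j • η j :=
        CStarModule.isFrame_iff_forall_exists_eq_sum_smul
    _ ↔ _ := forall_congr' fun ξ =>
        ⟨fun ⟨b, hb⟩ => ⟨MulOpposite.unop ∘ b, hb⟩, fun ⟨a, ha⟩ => ⟨MulOpposite.op ∘ a, ha⟩⟩
end

section
/- Let E be a Hilbert C*-module over a C*-algebra A, let η₁, …, η_k ∈ E, and let Θ : E → E be the module frame operator Θξ = Σ_{j=1}^k η_j · ⟨η_j, ξ⟩_A. Then there exist constants C, D > 0 such that C·⟨ξ,ξ⟩_A ≤ Σ_{j=1}^k ⟨ξ,η_j⟩_A·⟨η_j,ξ⟩_A ≤ D·⟨ξ,ξ⟩_A for all ξ ∈ E (i.e. (η₁,…,η_k) is a module frame for E) if and only if Θ is a bijection of E onto E. -/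
open scoped RightActions

/-- The Hilbert C*-module class with its older (right-module) meaning: Mathlib's `CStarModule`
now describes left modules (`SMul A E`). -/
class RightCStarModule (A E : Type*) [NonUnitalSemiring A] [StarRing A]
    [Module ℂ A] [AddCommGroup E] [Module ℂ E] [PartialOrder A] [SMul Aᵐᵒᵖ E] [Norm A] [Norm E]
    extends Inner A E where
  inner_add_right {x} {y} {z} : inner x (y + z) = inner x y + inner x z
  inner_self_nonneg {x} : 0 ≤ inner x x
  inner_self {x} : inner x x = 0 ↔ x = 0
  inner_op_smul_right {a : A} {x y : E} : inner x (y <• a) = inner x y * a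
  inner_smul_right_complex {z : ℂ} {x} {y} : inner x (z • y) = z • inner x y
  star_inner x y : star (inner x y) = inner y x
  norm_eq_sqrt_norm_inner_self x : ‖x‖ = √‖inner x x‖

/-!
The frame operator `Θ` is self-adjoint, `⟪ξ, Θ ξ⟫ = ∑ⱼ ⟪ξ, ηⱼ⟫ ⟪ηⱼ, ξ⟫ ≥ 0`, and the upper
frame bound always holds with `D = ∑ⱼ ‖ηⱼ‖²` (Cauchy–Schwarz).

If the lower bound `C ⟪ξ, ξ⟫ ≤ ⟪ξ, Θ ξ⟫` holds, a polarization argument gives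
`‖1 - D⁻¹ Θ‖ ≤ 1 - C / D < 1`, so `Θ` is invertible by the Neumann series.

Conversely, a bijective `Θ` is invertible in the C⋆-algebra of adjointable operators on `E`;
the same Neumann argument applied to `Θ - s`, `s < 0`, puts its spectrum in `(0, ∞)`. With `c > 0`
a lower bound of the spectrum, the continuous functional calculus writes `Θ - c = b * b` with `b`
self-adjoint, hence `⟪ξ, Θ ξ⟫ - c ⟪ξ, ξ⟫ = ⟪b ξ, b ξ⟫ ≥ 0`.
-/

attribute [simp] RightCStarModule.inner_add_right RightCStarModule.star_inner
  RightCStarModule.inner_op_smul_right RightCStarModule.inner_smul_right_complex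

namespace RightCStarModule

variable {A E : Type*} [NonUnitalCStarAlgebra A] [PartialOrder A]
  [NormedAddCommGroup E] [NormedSpace ℂ E] [SMul Aᵐᵒᵖ E] [RightCStarModule A E]

local notation "⟪" x ", " y "⟫" => inner A x y

@[simp]
lemma inner_add_left {x y z : E} : ⟪x + y, z⟫ = ⟪x, z⟫ + ⟪y, z⟫ := by
  rw [← star_inner, inner_add_right, star_add, star_inner, star_inner]

@[simp]
lemma inner_op_smul_left {a : A} {x y : E} : ⟪x <• a, y⟫ = star a * ⟪x, y⟫ := by
  rw [← star_inner]; simp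

@[simp]
lemma inner_smul_left_complex {z : ℂ} {x y : E} : ⟪z • x, y⟫ = star z • ⟪x, y⟫ := by
  rw [← star_inner]; simp

@[simp]
lemma inner_smul_right_real {r : ℝ} {x y : E} : ⟪x, r • y⟫ = r • ⟪x, y⟫ := by
  rw [← Complex.coe_smul, inner_smul_right_complex]; simp

@[simp]
lemma inner_smul_left_real {r : ℝ} {x y : E} : ⟪r • x, y⟫ = r • ⟪x, y⟫ := by
  rw [← star_inner, inner_smul_right_real, star_smul, star_trivial, star_inner]

def innerₛₗ : E →ₗ⋆[ℂ] E →ₗ[ℂ] A where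
  toFun x := { toFun := fun y => ⟪x, y⟫
               map_add' := fun _ _ => inner_add_right
               map_smul' := fun _ _ => inner_smul_right_complex }
  map_add' _ _ := by ext; simp
  map_smul' _ _ := by ext; simp

lemma innerₛₗ_apply {x y : E} : innerₛₗ (A := A) x y = ⟪x, y⟫ := rfl

@[simp] lemma inner_zero_left {x : E} : ⟪0, x⟫ = 0 := by simp [← innerₛₗ_apply]
@[simp] lemma inner_sub_right {x y z : E} : ⟪x, y - z⟫ = ⟪x, y⟫ - ⟪x, z⟫ := by
  simp [← innerₛₗ_apply]
@[simp] lemma inner_sub_left {x y z : E} : ⟪x - y, z⟫ = ⟪x, z⟫ - ⟪y, z⟫ := by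
  simp [← innerₛₗ_apply]

@[simp]
lemma inner_sum_right {ι : Type*} {s : Finset ι} {x : E} {y : ι → E} :
    ⟪x, ∑ i ∈ s, y i⟫ = ∑ i ∈ s, ⟪x, y i⟫ :=
  map_sum (innerₛₗ x) ..

lemma norm_sq_eq (x : E) : ‖x‖ ^ 2 = ‖⟪x, x⟫‖ := by
  simp [norm_eq_sqrt_norm_inner_self (A := A)]

lemma ext_inner_left {x y : E} (h : ∀ z : E, ⟪z, x⟫ = ⟪z, y⟫) : x = y := by
  rw [← sub_eq_zero, ← inner_self (A := A), inner_sub_right, h, sub_self]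

variable (A) in
lemma norm_op_smul_le (x : E) (a : A) : ‖x <• a‖ ≤ ‖x‖ * ‖a‖ := by
  refine le_of_pow_le_pow_left₀ two_ne_zero (by positivity) ?_
  calc ‖x <• a‖ ^ 2 = ‖star a * (⟪x, x⟫ * a)‖ := by
        rw [norm_sq_eq (A := A), inner_op_smul_left, inner_op_smul_right]
    _ ≤ ‖star a‖ * (‖⟪x, x⟫‖ * ‖a‖) := (norm_mul_le _ _).trans (by gcongr; exact norm_mul_le _ _)
    _ = (‖x‖ * ‖a‖) ^ 2 := by rw [norm_star, ← norm_sq_eq]; ring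

variable (A) in
def IsAdjointPair (T S : E →L[ℂ] E) : Prop := ∀ x y : E, ⟪T x, y⟫ = ⟪x, S y⟫

lemma IsAdjointPair.symm {T S : E →L[ℂ] E} (h : IsAdjointPair A T S) : IsAdjointPair A S T :=
  fun x y => by rw [← star_inner, ← h, star_inner]

lemma IsAdjointPair.unique {T S S' : E →L[ℂ] E} (h : IsAdjointPair A T S)
    (h' : IsAdjointPair A T S') : S = S' :=
  ContinuousLinearMap.ext fun y => ext_inner_left (A := A) fun z => by rw [← h, h']

variable (A E) in
def adjointable : Subalgebra ℂ (E →L[ℂ] E) where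
  carrier := {T | ∃ S, IsAdjointPair A T S}
  mul_mem' := by
    rintro T T' ⟨S, hS⟩ ⟨S', hS'⟩
    exact ⟨S' * S, fun x y => by change ⟪T (T' x), y⟫ = ⟪x, S' (S y)⟫; rw [hS, hS']⟩
  add_mem' := by
    rintro T T' ⟨S, hS⟩ ⟨S', hS'⟩
    exact ⟨S + S', fun x y => by
      rw [add_apply, add_apply, inner_add_left, inner_add_right, hS, hS']⟩
  algebraMap_mem' c := ⟨star c • 1, fun x y => by
    simp [Algebra.algebraMap_eq_smul_one, inner_smul_left_complex]⟩

noncomputable instance : Star (adjointable A E) :=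
  ⟨fun T => ⟨T.2.choose, T.1, T.2.choose_spec.symm⟩⟩

lemma isAdjointPair_star (T : adjointable A E) : IsAdjointPair A T.1 (star T).1 :=
  T.2.choose_spec

lemma star_eq_of_isAdjointPair {T S : adjointable A E} (h : IsAdjointPair A T.1 S.1) :
    star T = S :=
  Subtype.ext ((isAdjointPair_star T).unique h)

noncomputable instance : StarRing (adjointable A E) where
  star_involutive T := star_eq_of_isAdjointPair (isAdjointPair_star T).symm
  star_mul a b := star_eq_of_isAdjointPair fun x y => by
    change ⟪a.1 (b.1 x), y⟫ = ⟪x, (star b).1 ((star a).1 y)⟫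
    rw [isAdjointPair_star, isAdjointPair_star]
  star_add a b := star_eq_of_isAdjointPair fun x y => by
    change ⟪a.1 x + b.1 x, y⟫ = ⟪x, (star a).1 y + (star b).1 y⟫
    rw [inner_add_left, inner_add_right, isAdjointPair_star, isAdjointPair_star]

noncomputable instance : StarModule ℂ (adjointable A E) where
  star_smul c T := star_eq_of_isAdjointPair fun x y => by
    change ⟪c • T.1 x, y⟫ = ⟪x, star c • (star T).1 y⟫
    rw [inner_smul_left_complex, inner_smul_right_complex, isAdjointPair_star]

lemma isAdjointPair_of_isSelfAdjoint {T : adjointable A E} (hT : IsSelfAdjoint T) :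
    IsAdjointPair A T.1 T.1 := by
  simpa [hT.star_eq] using isAdjointPair_star T

lemma isUnit_of_isUnit_val {T : adjointable A E} (hT : IsSelfAdjoint T)
    (hunit : IsUnit (T : E →L[ℂ] E)) : IsUnit T := by
  obtain ⟨u, hu⟩ := hunit
  set G : E →L[ℂ] E := ↑u⁻¹
  have hTG : ∀ y, T.1 (G y) = y := fun y => by
    rw [← hu]; exact congrArg (fun f : E →L[ℂ] E => f y) u.mul_inv
  have hGT : ∀ y, G (T.1 y) = y := fun y => by
    rw [← hu]; exact congrArg (fun f : E →L[ℂ] E => f y) u.inv_mul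
  have hG : IsAdjointPair A G G := fun x y => by
    conv_lhs => rw [← hTG y]
    rw [← isAdjointPair_of_isSelfAdjoint hT, hTG]
  exact ⟨⟨T, ⟨G, G, hG⟩, Subtype.ext (ContinuousLinearMap.ext hTG),
    Subtype.ext (ContinuousLinearMap.ext hGT)⟩, rfl⟩

variable [StarOrderedRing A]

lemma inner_mul_inner_swap_le (x y : E) : ⟪y, x⟫ * ⟪x, y⟫ ≤ ‖x‖ ^ 2 • ⟪y, y⟫ := by
  rcases eq_or_ne x 0 with rfl | hx
  · simp
  -- expand `0 ≤ ⟪x <• a - ‖x‖² • y, x <• a - ‖x‖² • y⟫` at `a = ⟪x, y⟫`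
  have key : ∀ a : A, 0 ≤ ‖x‖ ^ 2 • (star a * a) - ‖x‖ ^ 2 • (⟪y, x⟫ * a)
      - ‖x‖ ^ 2 • (star a * ⟪x, y⟫) + ‖x‖ ^ 2 • (‖x‖ ^ 2 • ⟪y, y⟫) := fun a => by
    calc (0 : A) ≤ ⟪x <• a - ‖x‖ ^ 2 • y, x <• a - ‖x‖ ^ 2 • y⟫ := inner_self_nonneg
      _ = star a * ⟪x, x⟫ * a - ‖x‖ ^ 2 • (⟪y, x⟫ * a)
            - ‖x‖ ^ 2 • (star a * ⟪x, y⟫) + ‖x‖ ^ 2 • (‖x‖ ^ 2 • ⟪y, y⟫) := by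
        simp only [inner_sub_right, inner_op_smul_right, inner_sub_left, inner_op_smul_left,
          inner_smul_left_real, sub_mul, smul_mul_assoc, inner_smul_right_real, smul_sub,
          mul_assoc]
        abel
      _ ≤ _ := by
        gcongr
        calc _ ≤ ‖⟪x, x⟫‖ • (star a * a) :=
              CStarAlgebra.star_left_conjugate_le_norm_smul (star_inner _ _)
          _ = ‖x‖ ^ 2 • (star a * a) := by rw [norm_sq_eq (A := A)]
  specialize key ⟪x, y⟫
  simp only [star_inner, sub_self, zero_sub, le_neg_add_iff_add_le, add_zero] at key
  rwa [smul_le_smul_iff_of_pos_left (by positivity)] at key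

variable (A) in
lemma norm_inner_le (x y : E) : ‖⟪x, y⟫‖ ≤ ‖x‖ * ‖y‖ := by
  refine le_of_pow_le_pow_left₀ two_ne_zero (by positivity) ?_
  calc ‖⟪x, y⟫‖ ^ 2 = ‖⟪y, x⟫ * ⟪x, y⟫‖ := by
        rw [← star_inner x, CStarRing.norm_star_mul_self, pow_two]
    _ ≤ ‖‖x‖ ^ 2 • ⟪y, y⟫‖ := by
        refine CStarAlgebra.norm_le_norm_of_nonneg_of_le ?_ (inner_mul_inner_swap_le x y)
        rw [← star_inner x]
        exact star_mul_self_nonneg _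
    _ = (‖x‖ * ‖y‖) ^ 2 := by rw [norm_smul, ← norm_sq_eq]; simp [mul_pow]

variable (A E) in
noncomputable def innerSL : E →L⋆[ℂ] E →L[ℂ] A :=
  LinearMap.mkContinuous₂ innerₛₗ 1 fun x y => by simpa [innerₛₗ_apply] using norm_inner_le A x y

lemma continuous_inner : Continuous fun x : E × E => ⟪x.1, x.2⟫ :=
  show Continuous fun x : E × E => innerSL A E x.1 x.2 by fun_prop

lemma IsAdjointPair.norm_apply_le {T S : E →L[ℂ] E} (h : IsAdjointPair A T S) (y : E) :
    ‖S y‖ ≤ ‖T‖ * ‖y‖ := by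
  rcases (norm_nonneg (S y)).eq_or_lt with h0 | h0
  · rw [← h0]; positivity
  refine le_of_mul_le_mul_right ?_ h0
  calc ‖S y‖ * ‖S y‖ = ‖⟪T (S y), y⟫‖ := by rw [← sq, norm_sq_eq (A := A), h]
    _ ≤ ‖T (S y)‖ * ‖y‖ := norm_inner_le A _ _
    _ ≤ ‖T‖ * ‖S y‖ * ‖y‖ := by gcongr; exact T.le_opNorm _
    _ = ‖T‖ * ‖y‖ * ‖S y‖ := by ring

/-- Polarization: `4t ⟪Tx, Tx⟫ = ⟪x + tTx, T(x + tTx)⟫ - ⟪x - tTx, T(x - tTx)⟫` with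
`t = ‖x‖ / ‖Tx‖`. -/
lemma IsAdjointPair.norm_apply_le_of_inner_le {T : E →L[ℂ] E} (hT : IsAdjointPair A T T)
    (hpos : ∀ x, 0 ≤ ⟪x, T x⟫) {r : ℝ} (hr : 0 ≤ r) (hle : ∀ x, ⟪x, T x⟫ ≤ r • ⟪x, x⟫)
    (x : E) : ‖T x‖ ≤ r * ‖x‖ := by
  rcases eq_or_ne (T x) 0 with h0 | h0
  · rw [h0, norm_zero]; positivity
  have hx : x ≠ 0 := fun hx => h0 (by rw [hx, map_zero])
  have hTx : 0 < ‖T x‖ := norm_pos_iff.mpr h0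
  set t := ‖x‖ / ‖T x‖ with ht
  have htpos : 0 < t := by positivity
  set v := t • T x
  have polarization : (4 * t) • ⟪T x, T x⟫ = ⟪x + v, T (x + v)⟫ - ⟪x - v, T (x - v)⟫ := by
    have hsymm : ⟪x, T (T x)⟫ = ⟪T x, T x⟫ := (hT x (T x)).symm
    simp only [v, map_add, map_sub, ContinuousLinearMap.map_smul_of_tower, inner_add_left,
      inner_add_right, inner_sub_left, inner_sub_right, inner_smul_left_real,
      inner_smul_right_real, hsymm]
    module
  have key : (4 * t) • ⟪T x, T x⟫ ≤ r • ⟪x + v, x + v⟫ := calc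
    _ = ⟪x + v, T (x + v)⟫ - ⟪x - v, T (x - v)⟫ := polarization
    _ ≤ ⟪x + v, T (x + v)⟫ := sub_le_self _ (hpos _)
    _ ≤ r • ⟪x + v, x + v⟫ := hle _
  have hnorm := CStarAlgebra.norm_le_norm_of_nonneg_of_le
    (smul_nonneg (by positivity) inner_self_nonneg) key
  rw [norm_smul, norm_smul, ← norm_sq_eq, ← norm_sq_eq, Real.norm_of_nonneg (by positivity),
    Real.norm_of_nonneg hr] at hnorm
  have hv : ‖x + v‖ ≤ 2 * ‖x‖ := calc
    ‖x + v‖ ≤ ‖x‖ + t * ‖T x‖ := by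
      refine (norm_add_le _ _).trans ?_
      rw [norm_smul, Real.norm_of_nonneg htpos.le]
    _ = 2 * ‖x‖ := by rw [ht, div_mul_cancel₀ _ hTx.ne']; ring
  have : ‖x‖ * ‖T x‖ ≤ ‖x‖ * (r * ‖x‖) := calc
    ‖x‖ * ‖T x‖ = 4 * t * ‖T x‖ ^ 2 / 4 := by rw [ht]; field_simp
    _ ≤ r * ‖x + v‖ ^ 2 / 4 := by gcongr
    _ ≤ r * (2 * ‖x‖) ^ 2 / 4 := by gcongr
    _ = ‖x‖ * (r * ‖x‖) := by ring
  exact le_of_mul_le_mul_left this (norm_pos_iff.mpr hx)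

lemma norm_le_sqrt_norm_star_mul_self (T : adjointable A E) : ‖T‖ ≤ √‖star T * T‖ := by
  refine ContinuousLinearMap.opNorm_le_bound _ (Real.sqrt_nonneg _) fun x => ?_
  refine le_of_pow_le_pow_left₀ two_ne_zero (by positivity) ?_
  calc ‖T.1 x‖ ^ 2 = ‖⟪x, (star T * T).1 x⟫‖ := by
        rw [norm_sq_eq (A := A), isAdjointPair_star]; rfl
    _ ≤ ‖x‖ * (‖(star T * T).1‖ * ‖x‖) := by
        refine (norm_inner_le A _ _).trans ?_
        gcongr
        exact ContinuousLinearMap.le_opNorm _ _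
    _ = (√‖star T * T‖ * ‖x‖) ^ 2 := by
        rw [mul_pow, Real.sq_sqrt (norm_nonneg (star T * T))]
        change _ = ‖(star T * T).1‖ * _
        ring

instance : CStarRing (adjointable A E) where
  norm_mul_self_le T := calc
    ‖T‖ * ‖T‖ ≤ √‖star T * T‖ * √‖star T * T‖ := by
      gcongr <;> exact norm_le_sqrt_norm_star_mul_self T
    _ = ‖star T * T‖ := Real.mul_self_sqrt (norm_nonneg _)

section FrameOperator

variable {ι : Type*} [Fintype ι]

variable (A) in
noncomputable def frameOperator (η : ι → E) : E →L[ℂ] E :=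
  LinearMap.mkContinuous
    { toFun := fun ξ => ∑ j, η j <• ⟪η j, ξ⟫
      map_add' := fun x y => ext_inner_left (A := A) fun z => by
        simp only [inner_add_right, inner_sum_right, inner_op_smul_right, mul_add,
          Finset.sum_add_distrib]
      map_smul' := fun c x => ext_inner_left (A := A) fun z => by
        simp only [inner_sum_right, inner_op_smul_right, inner_smul_right_complex,
          mul_smul_comm, Finset.smul_sum, RingHom.id_apply] }
    (∑ j, ‖η j‖ ^ 2) fun ξ => by
      refine (norm_sum_le _ _).trans ?_
      rw [Finset.sum_mul]
      refine Finset.sum_le_sum fun j _ => ?_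
      calc ‖η j <• ⟪η j, ξ⟫‖ ≤ ‖η j‖ * (‖η j‖ * ‖ξ‖) :=
            (norm_op_smul_le A _ _).trans (by gcongr; exact norm_inner_le A _ _)
        _ = ‖η j‖ ^ 2 * ‖ξ‖ := by ring

lemma frameOperator_apply (η : ι → E) (ξ : E) :
    frameOperator A η ξ = ∑ j, η j <• ⟪η j, ξ⟫ := rfl

lemma inner_frameOperator (η : ι → E) (x ξ : E) :
    ⟪x, frameOperator A η ξ⟫ = ∑ j, ⟪x, η j⟫ * ⟪η j, ξ⟫ := by
  simp [frameOperator_apply]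

lemma isAdjointPair_frameOperator (η : ι → E) :
    IsAdjointPair A (frameOperator A η) (frameOperator A η) := fun x y => by
  rw [← star_inner, inner_frameOperator, inner_frameOperator, star_sum]
  simp [star_mul]

lemma inner_frameOperator_self_nonneg (η : ι → E) (ξ : E) : 0 ≤ ⟪ξ, frameOperator A η ξ⟫ := by
  rw [inner_frameOperator]
  refine Finset.sum_nonneg fun j _ => ?_
  rw [← star_inner ξ (η j)]
  exact mul_star_self_nonneg _

lemma inner_frameOperator_self_le (η : ι → E) (ξ : E) :
    ⟪ξ, frameOperator A η ξ⟫ ≤ (∑ j, ‖η j‖ ^ 2) • ⟪ξ, ξ⟫ := by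
  rw [inner_frameOperator, Finset.sum_smul]
  exact Finset.sum_le_sum fun j _ => inner_mul_inner_swap_le _ _

end FrameOperator

variable [CompleteSpace E]

/-- Neumann series: `‖1 - T / d‖ ≤ 1 - c / d < 1`. -/
lemma IsAdjointPair.isUnit_of_inner_bounds {T : E →L[ℂ] E} (hT : IsAdjointPair A T T)
    {c d : ℝ} (hc : 0 < c) (hlow : ∀ x, c • ⟪x, x⟫ ≤ ⟪x, T x⟫)
    (hup : ∀ x, ⟪x, T x⟫ ≤ d • ⟪x, x⟫) : IsUnit T := by
  wlog hcd : c ≤ d generalizing d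
  · exact this (fun x => (hup x).trans
      (smul_le_smul_of_nonneg_right (not_le.mp hcd).le inner_self_nonneg)) le_rfl
  have hd : 0 < d := hc.trans_le hcd
  set S : E →L[ℂ] E := 1 - d⁻¹ • T
  have hS : IsAdjointPair A S S := fun x y => by
    simp [S, inner_sub_left, inner_sub_right, inner_smul_left_real, inner_smul_right_real, hT x y]
  have inner_S : ∀ x, ⟪x, S x⟫ = ⟪x, x⟫ - d⁻¹ • ⟪x, T x⟫ := fun x => by
    simp [S, inner_sub_right, inner_smul_right_real]
  have hSpos : ∀ x, 0 ≤ ⟪x, S x⟫ := fun x => by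
    rw [inner_S, sub_nonneg]
    calc d⁻¹ • ⟪x, T x⟫ ≤ d⁻¹ • d • ⟪x, x⟫ := smul_le_smul_of_nonneg_left (hup x) (by positivity)
      _ = ⟪x, x⟫ := by rw [smul_smul, inv_mul_cancel₀ hd.ne', one_smul]
  have hSle : ∀ x, ⟪x, S x⟫ ≤ (1 - c / d) • ⟪x, x⟫ := fun x => by
    rw [inner_S, sub_smul, one_smul, div_eq_inv_mul, mul_smul]
    exact sub_le_sub_left (smul_le_smul_of_nonneg_left (hlow x) (by positivity)) _
  have hr : 0 ≤ 1 - c / d := sub_nonneg.mpr ((div_le_one hd).mpr hcd)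
  have hSnorm : ‖S‖ < 1 := calc
    ‖S‖ ≤ 1 - c / d :=
      ContinuousLinearMap.opNorm_le_bound _ hr (hS.norm_apply_le_of_inner_le hSpos hr hSle)
    _ < 1 := sub_lt_self _ (div_pos hc hd)
  have hunit : IsUnit (d⁻¹ • T) := by
    simpa [S] using (Units.oneSub S hSnorm).isUnit
  simpa [Units.smul_def, smul_smul, hd.ne'] using hunit.smul (Units.mk0 d hd.ne')

lemma isClosed_adjointable : IsClosed (adjointable A E : Set (E →L[ℂ] E)) := by
  refine isSeqClosed_iff_isClosed.mp fun u T hu hlim => ?_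
  choose S hS using hu
  -- `‖S m - S n‖ ≤ ‖u m - u n‖`, so the adjoints converge as well
  have hcauchy : CauchySeq S := by
    refine Metric.cauchySeq_iff.mpr fun ε hε => ?_
    obtain ⟨N, hN⟩ := Metric.cauchySeq_iff.mp hlim.cauchySeq ε hε
    refine ⟨N, fun m hm n hn => lt_of_le_of_lt ?_ (hN m hm n hn)⟩
    have hsub : IsAdjointPair A (u m - u n) (S m - S n) := fun x y => by
      rw [sub_apply, sub_apply, inner_sub_left, inner_sub_right, hS, hS]
    rw [dist_eq_norm, dist_eq_norm]
    exact ContinuousLinearMap.opNorm_le_bound _ (norm_nonneg _) hsub.norm_apply_le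
  obtain ⟨L, hL⟩ := cauchySeq_tendsto_of_complete hcauchy
  refine ⟨L, fun x y => tendsto_nhds_unique (l := Filter.atTop) (f := fun n => ⟪u n x, y⟫) ?_ ?_⟩
  · exact (continuous_inner.tendsto _).comp
      (((ContinuousLinearMap.apply ℂ E x).continuous.tendsto T).comp hlim |>.prodMk_nhds
        tendsto_const_nhds)
  · refine (Filter.tendsto_congr fun n => hS n x y).mpr ?_
    exact (continuous_inner.tendsto _).comp (tendsto_const_nhds.prodMk_nhds
      (((ContinuousLinearMap.apply ℂ E y).continuous.tendsto L).comp hL))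

instance : CompleteSpace (adjointable A E) :=
  isClosed_adjointable.completeSpace_coe

noncomputable instance : CStarAlgebra (adjointable A E) where

lemma smul_inner_le_of_forall_spectrum_le {T : adjointable A E} (hT : IsSelfAdjoint T) {c : ℝ}
    (hc : ∀ s ∈ spectrum ℝ T, c ≤ s) (x : E) : c • ⟪x, x⟫ ≤ ⟪x, T.1 x⟫ := by
  set b := cfc (fun s : ℝ => √(s - c)) T
  have hb : IsAdjointPair A b.1 b.1 := isAdjointPair_of_isSelfAdjoint (cfc_predicate _ _)
  have hbb : b * b = T - algebraMap ℝ (adjointable A E) c := by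
    rw [← cfc_mul .., cfc_congr fun s hs => Real.mul_self_sqrt (sub_nonneg.mpr (hc s hs)),
      cfc_sub .., cfc_id' ℝ T, cfc_const c T]
  have : ⟪x, T.1 x⟫ - c • ⟪x, x⟫ = ⟪b.1 x, b.1 x⟫ := by
    rw [hb, ← inner_smul_right_real, ← inner_sub_right]
    congr 1
    exact (congrArg (fun S : adjointable A E => S.1 x) hbb).symm
  rw [← sub_nonneg, this]
  exact inner_self_nonneg

lemma spectrum_pos_of_isUnit {T : adjointable A E} (hT : IsSelfAdjoint T)
    (hpos : ∀ x, 0 ≤ ⟪x, T.1 x⟫) {d : ℝ} (hup : ∀ x, ⟪x, T.1 x⟫ ≤ d • ⟪x, x⟫)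
    (hunit : IsUnit (T : E →L[ℂ] E)) : ∀ s ∈ spectrum ℝ T, 0 < s := by
  intro s hs
  by_contra! hs0
  refine spectrum.notMem_iff.mpr ?_ hs
  rcases hs0.eq_or_lt with rfl | hneg
  · simpa using (isUnit_of_isUnit_val hT hunit).neg
  -- `T - s` is bounded below by `-s > 0`
  have hsub : IsSelfAdjoint (T - algebraMap ℝ (adjointable A E) s) :=
    hT.sub (IsSelfAdjoint.algebraMap _ (.all s))
  have hval : ∀ x, (T - algebraMap ℝ (adjointable A E) s).1 x = T.1 x - s • x := fun x => rfl
  rw [← IsUnit.neg_iff, neg_sub]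
  refine isUnit_of_isUnit_val hsub ?_
  refine (isAdjointPair_of_isSelfAdjoint hsub).isUnit_of_inner_bounds (c := -s) (d := d - s)
    (neg_pos.mpr hneg) (fun x => ?_) (fun x => ?_)
  · rw [hval, inner_sub_right, inner_smul_right_real, neg_smul, sub_eq_add_neg]
    exact le_add_of_nonneg_left (hpos x)
  · rw [hval, inner_sub_right, inner_smul_right_real, sub_smul]
    exact sub_le_sub_right (hup x) _

lemma exists_pos_smul_inner_le {T : adjointable A E} (hT : IsSelfAdjoint T)
    (hpos : ∀ x, 0 ≤ ⟪x, T.1 x⟫) {d : ℝ} (hup : ∀ x, ⟪x, T.1 x⟫ ≤ d • ⟪x, x⟫)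
    (hunit : IsUnit (T : E →L[ℂ] E)) : ∃ c : ℝ, 0 < c ∧ ∀ x, c • ⟪x, x⟫ ≤ ⟪x, T.1 x⟫ := by
  obtain ⟨c, hc, hcσ⟩ := (spectrum.isCompact T).exists_forall_le' continuousOn_id
    (spectrum_pos_of_isUnit hT hpos hup hunit)
  exact ⟨c, hc, smul_inner_le_of_forall_spectrum_le hT hcσ⟩

end RightCStarModule

open RightCStarModule in
/-- Let `E` be a Hilbert C*-module over a C*-algebra `A`, let
`η₁, …, η_k ∈ E`, and let `Θ : E → E` be the module frame operator
`Θξ = Σ_j η_j · ⟪η_j, ξ⟫`.  Then there exist constants `C, D > 0` such that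
`C·⟪ξ,ξ⟫ ≤ Σ_j ⟪ξ,η_j⟫·⟪η_j,ξ⟫ ≤ D·⟪ξ,ξ⟫` for all `ξ ∈ E` (i.e. `(η₁,…,η_k)` is a module
frame for `E`) if and only if `Θ` is a bijection of `E` onto `E`. -/
theorem finite_module_frame_iff_frame_operator_bijective
    {A E : Type*} [NonUnitalCStarAlgebra A] [PartialOrder A] [StarOrderedRing A]
    [NormedAddCommGroup E] [NormedSpace ℂ E] [SMul Aᵐᵒᵖ E] [RightCStarModule A E]
    [CompleteSpace E]
    (k : ℕ) (η : Fin k → E)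
    (Θ : E → E) (hΘ : ∀ ξ : E, Θ ξ = ∑ j, η j <• (inner (𝕜 := A) (η j) ξ)) :
    (∃ C D : ℝ, 0 < C ∧ 0 < D ∧ ∀ ξ : E,
        (C : ℂ) • (inner (𝕜 := A) ξ ξ) ≤
          ∑ j, inner (𝕜 := A) ξ (η j) * inner (𝕜 := A) (η j) ξ ∧
        ∑ j, inner (𝕜 := A) ξ (η j) * inner (𝕜 := A) (η j) ξ ≤
          (D : ℂ) • (inner (𝕜 := A) ξ ξ)) ↔
    Function.Bijective Θ := by
  obtain rfl : Θ = frameOperator A η := funext hΘ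
  have hΘsymm := isAdjointPair_frameOperator (A := A) η
  simp_rw [Complex.coe_smul, ← inner_frameOperator, ← ContinuousLinearMap.isUnit_iff_bijective]
  constructor
  · rintro ⟨C, D, hC, -, hCD⟩
    exact hΘsymm.isUnit_of_inner_bounds hC (fun ξ => (hCD ξ).1) (fun ξ => (hCD ξ).2)
  · intro hunit
    obtain ⟨C, hC, hlow⟩ := exists_pos_smul_inner_le
      (T := ⟨frameOperator A η, _, hΘsymm⟩) (star_eq_of_isAdjointPair hΘsymm)
      (inner_frameOperator_self_nonneg η) (inner_frameOperator_self_le η) hunit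
    refine ⟨C, ∑ j, ‖η j‖ ^ 2 + 1, hC, by positivity, fun ξ => ⟨hlow ξ, ?_⟩⟩
    exact (inner_frameOperator_self_le η ξ).trans
      (smul_le_smul_of_nonneg_right (by linarith) inner_self_nonneg)
end
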